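/- arXiv:1212.2882 — 4 statements merged into one kernel-verified Lean document; each statement's English description precedes it below -/
import Mathlib

section
/- Let Ω, Ω̂ be p×p matrices with columns ω_{·j}, ω̂_{·j}, and set t = max_{i,j} |ω̂_{ij} − ω_{ij}|. Suppose that |ω̂_{·j}|₁ ≤ |ω_{·j}|₁ for every j, and that max_j Σ_i |ω_{ij}|^q ≤ c for some 0 ≤ q < 1. Then ‖Ω̂ − Ω‖₁ ≤ 12 c t^{1−q}, where ‖·‖₁ is the maximum absolute column sum. -/
/-- `|x|^q`, with `|x|^0` interpreted as the indicator of `x ≠ 0`. -/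
noncomputable def lqTerm (q x : ℝ) : ℝ := if x = 0 then 0 else |x| ^ q

/-!
Split the indices of a column `a` of `Ω` at the threshold `t`. The `ℓ_q` bound allows at most
`c t^{-q}` entries with `|a i| > t`, so on them the error `b - a` contributes at most
`c t^{1-q}`; the entries with `|a i| ≤ t` have total mass at most `c t^{1-q}` since
`|a i| ≤ |a i|^q t^{1-q}`. Because `‖b‖₁ ≤ ‖a‖₁`, the error off the large entries is controlled
by the error on them plus twice the small mass (the usual cone argument of `ℓ₁` recovery).
-/

open Finset

lemma lqTerm_nonneg (q x : ℝ) : 0 ≤ lqTerm q x := by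
  unfold lqTerm
  split_ifs
  exacts [le_rfl, Real.rpow_nonneg (abs_nonneg x) q]

lemma rpow_le_lqTerm {q t x : ℝ} (hq : 0 ≤ q) (ht : 0 ≤ t) (hx : t < |x|) :
    t ^ q ≤ lqTerm q x := by
  have hx0 : x ≠ 0 := fun h => by simp [h] at hx; linarith
  rw [lqTerm, if_neg hx0]
  exact Real.rpow_le_rpow ht hx.le hq

lemma abs_le_lqTerm_mul_rpow {q t x : ℝ} (hq : q ≤ 1) (hx : |x| ≤ t) :
    |x| ≤ lqTerm q x * t ^ (1 - q) := by
  by_cases hx0 : x = 0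
  · have ht : 0 ≤ t := (abs_nonneg x).trans hx
    rw [hx0, abs_zero]
    exact mul_nonneg (lqTerm_nonneg q 0) (Real.rpow_nonneg ht _)
  rw [lqTerm, if_neg hx0]
  calc |x| = |x| ^ q * |x| ^ (1 - q) := by
        rw [← Real.rpow_add' (abs_nonneg x) (by norm_num), add_sub_cancel, Real.rpow_one]
    _ ≤ |x| ^ q * t ^ (1 - q) := by gcongr

lemma sum_abs_sub_le_of_sum_abs_le {ι : Type*} [Fintype ι] [DecidableEq ι] {a b : ι → ℝ}
    (hab : ∑ i, |b i| ≤ ∑ i, |a i|) (s : Finset ι) :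
    ∑ i, |b i - a i| ≤ 2 * ∑ i ∈ s, |b i - a i| + 2 * ∑ i ∈ sᶜ, |a i| := by
  have hs : ∑ i ∈ s, |a i| - ∑ i ∈ s, |b i| ≤ ∑ i ∈ s, |b i - a i| := by
    rw [← sum_sub_distrib]
    gcongr with i
    rw [abs_sub_comm]
    exact abs_sub_abs_le_abs_sub _ _
  have hsc : ∑ i ∈ sᶜ, |b i - a i| ≤ ∑ i ∈ sᶜ, |b i| + ∑ i ∈ sᶜ, |a i| := by
    rw [← sum_add_distrib]
    exact sum_le_sum fun i _ => abs_sub _ _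
  rw [← sum_add_sum_compl s (fun i => |b i|), ← sum_add_sum_compl s (fun i => |a i|)] at hab
  rw [← sum_add_sum_compl s]
  linarith

section Column

variable {ι : Type*} [Fintype ι] {q t : ℝ} (a : ι → ℝ)

lemma card_filter_lt_abs_mul_rpow_le (hq : 0 ≤ q) (ht : 0 ≤ t) :
    (#{i | t < |a i|} : ℝ) * t ^ q ≤ ∑ i, lqTerm q (a i) := by
  rw [← nsmul_eq_mul, ← sum_const]
  calc ∑ _i ∈ {i | t < |a i|}, t ^ q ≤ ∑ i ∈ {i | t < |a i|}, lqTerm q (a i) :=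
        sum_le_sum fun i hi => rpow_le_lqTerm hq ht (mem_filter.mp hi).2
    _ ≤ ∑ i, lqTerm q (a i) :=
        sum_le_sum_of_subset_of_nonneg (subset_univ _) fun i _ _ => lqTerm_nonneg q (a i)

lemma sum_filter_abs_le_le_mul_rpow (hq : q ≤ 1) (ht : 0 ≤ t) :
    ∑ i ∈ {i | |a i| ≤ t}, |a i| ≤ (∑ i, lqTerm q (a i)) * t ^ (1 - q) := by
  rw [sum_mul]
  calc ∑ i ∈ {i | |a i| ≤ t}, |a i| ≤ ∑ i ∈ {i | |a i| ≤ t}, lqTerm q (a i) * t ^ (1 - q) :=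
        sum_le_sum fun i hi => abs_le_lqTerm_mul_rpow hq (mem_filter.mp hi).2
    _ ≤ ∑ i, lqTerm q (a i) * t ^ (1 - q) :=
        sum_le_sum_of_subset_of_nonneg (subset_univ _) fun i _ _ =>
          mul_nonneg (lqTerm_nonneg q (a i)) (Real.rpow_nonneg ht _)

lemma sum_abs_sub_le_of_lqTerm_le [DecidableEq ι] {b : ι → ℝ} {c : ℝ} (hq0 : 0 ≤ q)
    (hq1 : q ≤ 1) (ht : 0 ≤ t) (hab : ∑ i, |b i| ≤ ∑ i, |a i|)
    (hlq : ∑ i, lqTerm q (a i) ≤ c) (hdiff : ∀ i, |b i - a i| ≤ t) :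
    ∑ i, |b i - a i| ≤ 4 * c * t ^ (1 - q) := by
  set s : Finset ι := {i | t < |a i|}
  have hlarge : ∑ i ∈ s, |b i - a i| ≤ c * t ^ (1 - q) :=
    calc ∑ i ∈ s, |b i - a i| ≤ #s * t := by
          simpa using sum_le_sum fun i (_ : i ∈ s) => hdiff i
      _ = #s * t ^ q * t ^ (1 - q) := by
          rw [mul_assoc, ← Real.rpow_add' ht (by norm_num), add_sub_cancel, Real.rpow_one]
      _ ≤ c * t ^ (1 - q) := by
          gcongr
          exact (card_filter_lt_abs_mul_rpow_le a hq0 ht).trans hlq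
  have hsmall : ∑ i ∈ sᶜ, |a i| ≤ c * t ^ (1 - q) := by
    have hsc : sᶜ = ({i | |a i| ≤ t} : Finset ι) := by ext; simp [s]
    rw [hsc]
    exact (sum_filter_abs_le_le_mul_rpow a hq1 ht).trans (by gcongr)
  linarith [sum_abs_sub_le_of_sum_abs_le hab s]

end Column

/-- Lemma le5: if every column of `Ω̂` has `ℓ₁` norm no larger than
the corresponding column of `Ω`, each column of `Ω` lies in the `ℓ_q` ball of
radius `c`, and `t` bounds the entrywise difference, then
`‖Ω̂ − Ω‖₁ ≤ 12 c t^{1−q}` (maximum absolute column sum norm). -/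
theorem stmt7 {p : ℕ} (q c t : ℝ) (hq0 : 0 ≤ q) (hq1 : q < 1) (hc : 0 < c)
    (ht0 : 0 ≤ t)
    (Ω Ωhat : Matrix (Fin p) (Fin p) ℝ)
    (hcol : ∀ j, ∑ i, |Ωhat i j| ≤ ∑ i, |Ω i j|)
    (hlq : ∀ j, ∑ i, lqTerm q (Ω i j) ≤ c)
    (ht : ∀ i j, |Ωhat i j - Ω i j| ≤ t) :
    (⨆ j : Fin p, ∑ i, |Ωhat i j - Ω i j|) ≤ 12 * c * t ^ (1 - q) := by
  have hbound : 0 ≤ c * t ^ (1 - q) := mul_nonneg hc.le (Real.rpow_nonneg ht0 _)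
  refine Real.iSup_le (fun j => ?_) (by linarith)
  calc ∑ i, |Ωhat i j - Ω i j| ≤ 4 * c * t ^ (1 - q) :=
        sum_abs_sub_le_of_lqTerm_le (fun i => Ω i j) hq0 hq1.le ht0 (hcol j) (hlq j)
          fun i => ht i j
    _ ≤ 12 * c * t ^ (1 - q) := by linarith
end

section
/- (Key step of Lemma le5) Let h = ω̂ − ω ∈ ℝ^p, t ≥ 0 with max_i |h_i| ≤ t, and suppose |ω̂|₁ ≤ |ω|₁. Decompose h = h¹ + h², where h¹_i = ω̂_i 1{|ω̂_i| ≥ 2t} − ω_i and h²_i = ω̂_i 1{|ω̂_i| < 2t}. Then |h²|₁ ≤ |h¹|₁, and consequently |h|₁ ≤ 2|h¹|₁. -/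
/-!
Split `ω̂` at level `2t` into its large part `ω + h¹` and its small part `h²`; these have disjoint
supports, so `|ω̂|₁ = |ω + h¹|₁ + |h²|₁`. The triangle inequality `|ω|₁ ≤ |ω + h¹|₁ + |h¹|₁` together
with `|ω̂|₁ ≤ |ω|₁` then forces `|h²|₁ ≤ |h¹|₁`, and `|h|₁ ≤ |h¹|₁ + |h²|₁ ≤ 2 |h¹|₁`.
-/

open Finset

lemma ite_le_abs_add_ite_abs_lt (a x : ℝ) :
    ((if a ≤ |x| then x else 0) + if |x| < a then x else 0) = x := by
  by_cases hx : a ≤ |x|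
  · simp [hx, not_lt.mpr hx]
  · simp [hx, lt_of_not_ge hx]

lemma abs_ite_le_abs_add_abs_ite_abs_lt (a x : ℝ) :
    |if a ≤ |x| then x else 0| + |if |x| < a then x else 0| = |x| := by
  by_cases hx : a ≤ |x|
  · simp [hx, not_lt.mpr hx]
  · simp [hx, lt_of_not_ge hx]

section
variable {ι : Type*} (s : Finset ι)

lemma sum_abs_le_sum_abs_of_sum_abs_add_add_le {x a b : ι → ℝ}
    (h : ∑ i ∈ s, (|x i + a i| + |b i|) ≤ ∑ i ∈ s, |x i|) :
    ∑ i ∈ s, |b i| ≤ ∑ i ∈ s, |a i| := by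
  have triangle : ∑ i ∈ s, |x i| ≤ ∑ i ∈ s, (|x i + a i| + |a i|) :=
    sum_le_sum fun i _ => by simpa using abs_sub (x i + a i) (a i)
  rw [sum_add_distrib] at h triangle
  linarith

lemma sum_abs_add_le_two_mul_of_sum_abs_le {a b : ι → ℝ}
    (hb : ∑ i ∈ s, |b i| ≤ ∑ i ∈ s, |a i|) :
    ∑ i ∈ s, |a i + b i| ≤ 2 * ∑ i ∈ s, |a i| := by
  have triangle : ∑ i ∈ s, |a i + b i| ≤ ∑ i ∈ s, (|a i| + |b i|) :=
    sum_le_sum fun i _ => abs_add_le (a i) (b i)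
  rw [sum_add_distrib] at triangle
  linarith

end

theorem stmt8_general {p : ℕ} (t : ℝ) (ω ωhat : Fin p → ℝ)
    (hl1 : ∑ i, |ωhat i| ≤ ∑ i, |ω i|)
    (h h1 h2 : Fin p → ℝ)
    (hh : h = fun i => ωhat i - ω i)
    (hh1 : h1 = fun i => (if 2 * t ≤ |ωhat i| then ωhat i else 0) - ω i)
    (hh2 : h2 = fun i => if |ωhat i| < 2 * t then ωhat i else 0) :
    (∑ i, |h2 i|) ≤ (∑ i, |h1 i|) ∧ (∑ i, |h i|) ≤ 2 * ∑ i, |h1 i| := by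
  subst hh hh1 hh2
  have key : ∑ i, |if |ωhat i| < 2 * t then ωhat i else 0|
      ≤ ∑ i, |(if 2 * t ≤ |ωhat i| then ωhat i else 0) - ω i| := by
    refine sum_abs_le_sum_abs_of_sum_abs_add_add_le _ (x := ω) ?_
    simpa only [add_sub_cancel, abs_ite_le_abs_add_abs_ite_abs_lt] using hl1
  refine ⟨key, ?_⟩
  have split : ∀ i, ωhat i - ω i
      = ((if 2 * t ≤ |ωhat i| then ωhat i else 0) - ω i) + if |ωhat i| < 2 * t then ωhat i else 0 :=
    fun i => by linarith [ite_le_abs_add_ite_abs_lt (2 * t) (ωhat i)]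
  simpa only [split] using sum_abs_add_le_two_mul_of_sum_abs_le _ key

/-- key step of Lemma le5: with `h = ω̂ − ω`, entrywise bound `t`,
`|ω̂|₁ ≤ |ω|₁`, and the thresholded decomposition `h = h¹ + h²`, one has
`|h²|₁ ≤ |h¹|₁` and `|h|₁ ≤ 2 |h¹|₁`. -/
theorem stmt8 {p : ℕ} (t : ℝ) (ht : 0 ≤ t) (ω ωhat : Fin p → ℝ)
    (hbd : ∀ i, |ωhat i - ω i| ≤ t)
    (hl1 : ∑ i, |ωhat i| ≤ ∑ i, |ω i|)
    (h h1 h2 : Fin p → ℝ)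
    (hh : h = fun i => ωhat i - ω i)
    (hh1 : h1 = fun i => (if 2 * t ≤ |ωhat i| then ωhat i else 0) - ω i)
    (hh2 : h2 = fun i => if |ωhat i| < 2 * t then ωhat i else 0) :
    (∑ i, |h2 i|) ≤ (∑ i, |h1 i|) ∧ (∑ i, |h i|) ≤ 2 * ∑ i, |h1 i| :=
  stmt8_general t ω ωhat hl1 h h1 h2 hh hh1 hh2
end

section
/- (Lemma dffbd, per-comparison loss) Let Ω(θ) = (M/2)[I_p + ε Σ_{m=1}^r γ_m λ_m(b_m)] and Ω(θ') defined analogously with γ'_m, where r = ⌈p/2⌉, each λ_m(b) is the p×p matrix whose m-th row equals b ∈ {0,1}^p (supported on the last r coordinates, with exactly k ones) and is zero elsewhere. Then ‖Ω(θ) − Ω(θ')‖₂² ≥ H(γ, γ') · (Mkε/2)² / p, where H(γ,γ') = Σ_m |γ_m − γ'_m| is the Hamming distance. -/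
open Matrix

/-- The spectral norm of a matrix: the operator norm induced by the Euclidean norm. -/
noncomputable def matSpectralNorm {p : ℕ} (A : Matrix (Fin p) (Fin p) ℝ) : ℝ :=
  ‖(LinearMap.toContinuousLinearMap
      (Matrix.toEuclideanLin A))‖

/-!
Test `Ω(θ) - Ω(θ')` against the indicator `v` of the last `r` coordinates. Row `m` of the
difference is `(M/2) ε (γ_m - γ'_m) b_m`, and `b_m ⬝ᵥ v = k` because `b_m` is a 0/1 vector with
`k` ones supported where `v = 1`. So every index where `γ` and `γ'` disagree contributes
`(Mkε/2)²` to `‖(Ω(θ) - Ω(θ')) v‖²`, which is at most `‖Ω(θ) - Ω(θ')‖₂² ‖v‖² ≤ ‖Ω(θ) - Ω(θ')‖₂² p`.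
-/

theorem norm_toLp_mulVec_le_matSpectralNorm_mul {p : ℕ} (A : Matrix (Fin p) (Fin p) ℝ)
    (v : EuclideanSpace ℝ (Fin p)) :
    ‖WithLp.toLp 2 (A *ᵥ v)‖ ≤ matSpectralNorm A * ‖v‖ :=
  (LinearMap.toContinuousLinearMap (Matrix.toEuclideanLin A)).le_opNorm v

theorem sum_sq_comp_le_norm_sq {ι κ : Type*} [Fintype ι] [Fintype κ] (e : ι ↪ κ)
    (w : EuclideanSpace ℝ κ) : ∑ i, w (e i) ^ 2 ≤ ‖w‖ ^ 2 := by
  rw [EuclideanSpace.real_norm_sq_eq, ← Finset.sum_map Finset.univ e fun i => w i ^ 2]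
  exact Finset.sum_le_sum_of_subset_of_nonneg (Finset.subset_univ _) fun i _ _ => sq_nonneg _

theorem norm_sq_le_card_of_abs_le_one {ι : Type*} [Fintype ι] (v : EuclideanSpace ℝ ι)
    (hv : ∀ i, |v i| ≤ 1) : ‖v‖ ^ 2 ≤ Fintype.card ι := by
  rw [EuclideanSpace.real_norm_sq_eq]
  calc ∑ i, v i ^ 2 ≤ ∑ _i : ι, (1 : ℝ) :=
        Finset.sum_le_sum fun i _ => by
          rw [← sq_abs]; exact pow_le_one₀ (abs_nonneg _) (hv i)
    _ = Fintype.card ι := by simp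

theorem dotProduct_eq_card_support {ι : Type*} [Fintype ι] [DecidableEq ι] {x v : ι → ℝ}
    (hx : ∀ j, x j = 0 ∨ x j = 1) (hv : ∀ j, x j ≠ 0 → v j = 1) :
    x ⬝ᵥ v = (Finset.univ.filter fun j => x j ≠ 0).card := by
  rw [dotProduct, Finset.card_eq_sum_ones, Nat.cast_sum, Finset.sum_filter]
  refine Finset.sum_congr rfl fun j _ => ?_
  rcases hx j with h | h
  · simp [h]
  · simp [h, hv j]

theorem abs_sub_eq_sub_sq {a b : ℝ} (ha : a = 0 ∨ a = 1) (hb : b = 0 ∨ b = 1) :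
    |a - b| = (a - b) ^ 2 := by
  rcases ha with rfl | rfl <;> rcases hb with rfl | rfl <;> norm_num

/-- The paper's `λ_m(x)`. -/
def rowMatrix {p : ℕ} (m : ℕ) (x : Fin p → ℝ) : Matrix (Fin p) (Fin p) ℝ :=
  Matrix.of fun i j => if (i : ℕ) = m then x j else 0

theorem sum_smul_rowMatrix_mulVec_castLE {p r : ℕ} (hrp : r ≤ p) (c : Fin r → ℝ)
    (x : Fin r → Fin p → ℝ) (v : Fin p → ℝ) (m : Fin r) :
    ((∑ n, c n • rowMatrix n (x n)) *ᵥ v) (Fin.castLE hrp m) = c m * (x m ⬝ᵥ v) := by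
  rw [Matrix.sum_mulVec, Finset.sum_apply, Finset.sum_eq_single m]
  · simp [rowMatrix, Matrix.mulVec, dotProduct, Finset.mul_sum, mul_assoc]
  · intro n _ hn
    simp [rowMatrix, Matrix.mulVec, dotProduct, Fin.val_eq_val, Ne.symm hn]
  · simp

theorem stmt12_general {p k : ℕ} (M ε : ℝ)
    (r : ℕ) (hr : r = (p + 1) / 2)
    (b : Fin r → Fin p → ℝ)
    (hb01 : ∀ m j, b m j = 0 ∨ b m j = 1)
    (hbsupp : ∀ m, ∀ j : Fin p, (j : ℕ) < p - r → b m j = 0)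
    (hbk : ∀ m, (Finset.univ.filter fun j => b m j ≠ 0).card = k)
    (γ γ' : Fin r → ℝ)
    (hγ : ∀ m, γ m = 0 ∨ γ m = 1) (hγ' : ∀ m, γ' m = 0 ∨ γ' m = 1)
    (Ω Ω' : Matrix (Fin p) (Fin p) ℝ)
    (hΩ : Ω = (M / 2) • ((1 : Matrix (Fin p) (Fin p) ℝ) +
      ε • ∑ m : Fin r, γ m • Matrix.of fun (i j : Fin p) =>
        if (i : ℕ) = (m : ℕ) then b m j else 0))
    (hΩ' : Ω' = (M / 2) • ((1 : Matrix (Fin p) (Fin p) ℝ) +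
      ε • ∑ m : Fin r, γ' m • Matrix.of fun (i j : Fin p) =>
        if (i : ℕ) = (m : ℕ) then b m j else 0)) :
    (∑ m : Fin r, |γ m - γ' m|) * (M * k * ε / 2) ^ 2 / p ≤
      matSpectralNorm (Ω - Ω') ^ 2 := by
  have hrp : r ≤ p := by omega
  have hdiff : Ω - Ω' = ∑ m, (M / 2 * ε * (γ m - γ' m)) • rowMatrix m (b m) := by
    simp only [hΩ, hΩ', ← smul_sub, add_sub_add_left_eq_sub, ← Finset.sum_sub_distrib,
      ← sub_smul, Finset.smul_sum, smul_smul, mul_assoc, mul_sub]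
    rfl
  let v : EuclideanSpace ℝ (Fin p) := WithLp.toLp 2 fun j => if p - r ≤ (j : ℕ) then 1 else 0
  have hbv : ∀ m, b m ⬝ᵥ v = k := fun m => by
    rw [dotProduct_eq_card_support (hb01 m), hbk m]
    intro j hj
    simp only [v, if_pos (not_lt.mp fun h => hj (hbsupp m j h))]
  have hv : ‖v‖ ^ 2 ≤ p := by
    simpa using norm_sq_le_card_of_abs_le_one v fun j => by
      simp only [v]; split_ifs <;> norm_num
  calc (∑ m, |γ m - γ' m|) * (M * k * ε / 2) ^ 2 / p
      = (∑ m, ((Ω - Ω') *ᵥ v) (Fin.castLEEmb hrp m) ^ 2) / p := by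
        simp only [Finset.sum_mul, hdiff, Fin.castLEEmb_apply, sum_smul_rowMatrix_mulVec_castLE,
          hbv, abs_sub_eq_sub_sq (hγ _) (hγ' _)]
        congr 1; refine Finset.sum_congr rfl fun m _ => by ring
    _ ≤ ‖WithLp.toLp 2 ((Ω - Ω') *ᵥ v)‖ ^ 2 / p := by
        gcongr; exact sum_sq_comp_le_norm_sq (Fin.castLEEmb hrp) (WithLp.toLp 2 ((Ω - Ω') *ᵥ v))
    _ ≤ matSpectralNorm (Ω - Ω') ^ 2 := by
        refine div_le_of_le_mul₀ (Nat.cast_nonneg _) (sq_nonneg _) ?_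
        calc ‖WithLp.toLp 2 ((Ω - Ω') *ᵥ v)‖ ^ 2 ≤ (matSpectralNorm (Ω - Ω') * ‖v‖) ^ 2 := by
              gcongr; exact norm_toLp_mulVec_le_matSpectralNorm_mul _ v
          _ ≤ matSpectralNorm (Ω - Ω') ^ 2 * p := by rw [mul_pow]; gcongr

/-- Lemma dffbd: for the precision matrices
`Ω(θ) = (M/2)[I + ε Σ_m γ_m λ_m(b_m)]` built from `γ, γ' ∈ {0,1}^r` (sharing the
same rows `b_m`, each a 0/1 vector supported on the last `r` coordinates with
exactly `k` ones), the spectral norm satisfies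
`‖Ω(θ) − Ω(θ')‖₂² ≥ H(γ,γ')·(Mkε/2)²/p`. -/
theorem stmt12 {p k : ℕ} (hp : 2 ≤ p) (hk : 1 ≤ k) (M ε : ℝ)
    (hM : 0 < M) (hε : 0 < ε)
    (r : ℕ) (hr : r = (p + 1) / 2)
    (b : Fin r → Fin p → ℝ)
    (hb01 : ∀ m j, b m j = 0 ∨ b m j = 1)
    (hbsupp : ∀ m, ∀ j : Fin p, (j : ℕ) < p - r → b m j = 0)
    (hbk : ∀ m, (Finset.univ.filter fun j => b m j ≠ 0).card = k)
    (γ γ' : Fin r → ℝ)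
    (hγ : ∀ m, γ m = 0 ∨ γ m = 1) (hγ' : ∀ m, γ' m = 0 ∨ γ' m = 1)
    (Ω Ω' : Matrix (Fin p) (Fin p) ℝ)
    (hΩ : Ω = (M / 2) • ((1 : Matrix (Fin p) (Fin p) ℝ) +
      ε • ∑ m : Fin r, γ m • Matrix.of fun (i j : Fin p) =>
        if (i : ℕ) = (m : ℕ) then b m j else 0))
    (hΩ' : Ω' = (M / 2) • ((1 : Matrix (Fin p) (Fin p) ℝ) +
      ε • ∑ m : Fin r, γ' m • Matrix.of fun (i j : Fin p) =>
        if (i : ℕ) = (m : ℕ) then b m j else 0)) :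
    (∑ m : Fin r, |γ m - γ' m|) * (M * k * ε / 2) ^ 2 / p ≤
      matSpectralNorm (Ω - Ω') ^ 2 :=
  stmt12_general M ε r hr b hb01 hbsupp hbk γ γ' hγ hγ' Ω Ω' hΩ hΩ'
end

section
/- (Le Cam–Assouad hybrid bound, Lemma AL, special case) Let Θ = Γ × Λ with Γ = {0,1}^r, and for each θ ∈ Θ let P_θ be a probability measure and ψ(θ) an element of a metric space (M, d). For a ∈ {0,1} and 1 ≤ i ≤ r, let P̄_{a,i} be the uniform mixture of {P_θ : γ_i(θ) = a}. Then for any estimator T and any s > 0, max_{θ∈Θ} 2^s E_θ d^s(T, ψ(θ)) ≥ α (r/2) min_{1≤i≤r} ‖P̄_{0,i} ∧ P̄_{1,i}‖, where α = min{ d^s(ψ(θ), ψ(θ')) / H(γ(θ), γ(θ')) : H(γ(θ), γ(θ')) ≥ 1 } and ‖P ∧ Q‖ = ∫ min(dP, dQ) is the total variation affinity. -/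
/-!
Fix an observation `z` and let `θ̂` be a parameter with `ψ θ̂` nearest to `T z`. The triangle
inequality gives `d(ψ θ̂, ψ θ) ≤ 2 d(T z, ψ θ)`, hence `α H(γ θ̂, γ θ) ≤ 2^s d(T z, ψ θ)^s` for
every `θ`. Weighting by the densities, `∑_θ H(γ θ̂, γ θ) f_θ(z)` splits over the coordinates `i`
into the mass of `{θ : γ_i θ ≠ γ_i θ̂}`, which dominates the minimum of the two mixture
densities at coordinate `i`. Integrating, and bounding the sum of the `2^r |Λ|` risks by that
many times the largest one, gives the bound.
-/

open MeasureTheory Finset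

theorem hammingDist_cast_eq_sum {ι R : Type*} {β : ι → Type*} [Fintype ι]
    [∀ i, DecidableEq (β i)] [AddCommMonoidWithOne R] (x y : ∀ i, β i) :
    (hammingDist x y : R) = ∑ i, if x i = y i then 0 else 1 := by
  simp [hammingDist, Finset.card_filter, ite_not]

theorem sum_min_sum_filter_le_sum_hammingDist_mul {Θ ι : Type*} [Fintype Θ] [Fintype ι]
    (γ : Θ → ι → Bool) (w : Θ → ℝ) (b : ι → Bool) :
    ∑ i, min (∑ θ with γ θ i = false, w θ) (∑ θ with γ θ i = true, w θ) ≤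
      ∑ θ, (hammingDist b (γ θ) : ℝ) * w θ :=
  calc ∑ i, min (∑ θ with γ θ i = false, w θ) (∑ θ with γ θ i = true, w θ)
      ≤ ∑ i, ∑ θ with γ θ i = !b i, w θ := by
        gcongr with i
        cases b i
        · exact min_le_right _ _
        · exact min_le_left _ _
    _ = ∑ θ, (hammingDist b (γ θ) : ℝ) * w θ := by
        simp_rw [hammingDist_cast_eq_sum, sum_mul, sum_filter]
        rw [sum_comm]
        refine sum_congr rfl fun θ _ => sum_congr rfl fun i _ => ?_
        cases b i <;> cases γ θ i <;> simp

theorem exists_forall_mul_hammingDist_le_two_rpow_mul {Θ ι M : Type*} [Finite Θ] [Nonempty Θ]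
    [Fintype ι] [PseudoMetricSpace M] (γ : Θ → ι → Bool) (ψ : Θ → M) {s α : ℝ} (hs : 0 ≤ s)
    (hα : ∀ θ θ', γ θ ≠ γ θ' → α * hammingDist (γ θ) (γ θ') ≤ dist (ψ θ) (ψ θ') ^ s) (x : M) :
    ∃ b : ι → Bool, ∀ θ, α * hammingDist b (γ θ) ≤ 2 ^ s * dist x (ψ θ) ^ s := by
  obtain ⟨θ₀, hθ₀⟩ := Finite.exists_min fun θ => dist x (ψ θ)
  refine ⟨γ θ₀, fun θ => ?_⟩
  by_cases hγ : γ θ₀ = γ θ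
  · simp only [hγ, hammingDist_self, Nat.cast_zero, mul_zero]
    positivity
  have hψ : dist (ψ θ₀) (ψ θ) ≤ 2 * dist x (ψ θ) := by
    linarith [dist_triangle_left (ψ θ₀) (ψ θ) x, hθ₀ θ]
  calc α * hammingDist (γ θ₀) (γ θ) ≤ dist (ψ θ₀) (ψ θ) ^ s := hα θ₀ θ hγ
    _ ≤ (2 * dist x (ψ θ)) ^ s := by gcongr
    _ = 2 ^ s * dist x (ψ θ) ^ s := by rw [Real.mul_rpow zero_le_two dist_nonneg]

theorem mul_sum_min_sum_filter_le_sum_two_rpow_mul {Θ ι M : Type*} [Fintype Θ] [Fintype ι]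
    [PseudoMetricSpace M] (γ : Θ → ι → Bool) (ψ : Θ → M) {s α : ℝ} (hs : 0 ≤ s) (hα0 : 0 ≤ α)
    (hα : ∀ θ θ', γ θ ≠ γ θ' → α * hammingDist (γ θ) (γ θ') ≤ dist (ψ θ) (ψ θ') ^ s)
    (w : Θ → ℝ) (hw : ∀ θ, 0 ≤ w θ) (x : M) :
    α * ∑ i, min (∑ θ with γ θ i = false, w θ) (∑ θ with γ θ i = true, w θ) ≤
      ∑ θ, 2 ^ s * dist x (ψ θ) ^ s * w θ := by
  cases isEmpty_or_nonempty Θ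
  · simp
  obtain ⟨b, hb⟩ := exists_forall_mul_hammingDist_le_two_rpow_mul γ ψ hs hα x
  calc α * ∑ i, min (∑ θ with γ θ i = false, w θ) (∑ θ with γ θ i = true, w θ)
      ≤ α * ∑ θ, (hammingDist b (γ θ) : ℝ) * w θ :=
        mul_le_mul_of_nonneg_left (sum_min_sum_filter_le_sum_hammingDist_mul γ w b) hα0
    _ = ∑ θ, α * hammingDist b (γ θ) * w θ := by simp only [mul_sum, mul_assoc]
    _ ≤ ∑ θ, 2 ^ s * dist x (ψ θ) ^ s * w θ :=
        sum_le_sum fun θ _ => mul_le_mul_of_nonneg_right (hb θ) (hw θ)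

theorem mul_sum_integral_min_le_mul_sum_two_rpow_mul_integral {Θ ι M Z : Type*} [Fintype Θ]
    [Fintype ι] [PseudoMetricSpace M] [MeasurableSpace Z] (γ : Θ → ι → Bool) (ψ : Θ → M)
    {s α : ℝ} (hs : 0 ≤ s) (hα0 : 0 ≤ α)
    (hα : ∀ θ θ', γ θ ≠ γ θ' → α * hammingDist (γ θ) (γ θ') ≤ dist (ψ θ) (ψ θ') ^ s)
    (ν : Measure Z) (f : Θ → Z → ℝ) (hf0 : ∀ θ z, 0 ≤ f θ z) (hfi : ∀ θ, Integrable (f θ) ν)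
    (T : Z → M) (hTint : ∀ θ, Integrable (fun z => dist (T z) (ψ θ) ^ s * f θ z) ν)
    {c : ℝ} (hc : 0 ≤ c) :
    α * ∑ i, ∫ z, min (c * ∑ θ with γ θ i = false, f θ z)
        (c * ∑ θ with γ θ i = true, f θ z) ∂ν ≤
      c * ∑ θ, 2 ^ s * ∫ z, dist (T z) (ψ θ) ^ s * f θ z ∂ν := by
  have hmix : ∀ i b, Integrable (fun z => c * ∑ θ with γ θ i = b, f θ z) ν := fun i b =>
    (integrable_finsetSum _ fun θ _ => hfi θ).const_mul c
  have hmin : ∀ i, Integrable (fun z => min (c * ∑ θ with γ θ i = false, f θ z)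
      (c * ∑ θ with γ θ i = true, f θ z)) ν := fun i => (hmix i false).inf (hmix i true)
  have hrisk : ∀ θ, Integrable (fun z => 2 ^ s * dist (T z) (ψ θ) ^ s * (c * f θ z)) ν :=
    fun θ => by
      simpa only [mul_left_comm c, ← mul_assoc] using ((hTint θ).const_mul (2 ^ s)).const_mul c
  calc α * ∑ i, ∫ z, min (c * ∑ θ with γ θ i = false, f θ z)
        (c * ∑ θ with γ θ i = true, f θ z) ∂ν
      = ∫ z, α * ∑ i, min (∑ θ with γ θ i = false, c * f θ z)
          (∑ θ with γ θ i = true, c * f θ z) ∂ν := by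
        simp only [← mul_sum]
        rw [integral_const_mul, integral_finsetSum _ fun i _ => hmin i]
    _ ≤ ∫ z, ∑ θ, 2 ^ s * dist (T z) (ψ θ) ^ s * (c * f θ z) ∂ν := by
        refine integral_mono ?_ (integrable_finsetSum _ fun θ _ => hrisk θ) fun z =>
          mul_sum_min_sum_filter_le_sum_two_rpow_mul γ ψ hs hα0 hα _
            (fun θ => mul_nonneg hc (hf0 θ z)) (T z)
        simpa only [mul_sum] using (integrable_finsetSum _ fun i _ => hmin i).const_mul α
    _ = c * ∑ θ, 2 ^ s * ∫ z, dist (T z) (ψ θ) ^ s * f θ z ∂ν := by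
        rw [integral_finsetSum _ fun θ _ => hrisk θ, mul_sum]
        refine sum_congr rfl fun θ _ => ?_
        rw [← integral_const_mul, ← integral_const_mul]
        congr 1 with z
        ring

-- Equality holds when `r ≥ 1` and `L > 0`; the inequality also covers the junk values at `r = 0`
-- (truncated `r - 1`) and `L = 0` (division by zero).
theorem two_pow_mul_div_two_pow_pred_mul_le (r : ℕ) {L : ℝ} (hL : 0 ≤ L) :
    2 ^ r * L / (2 ^ (r - 1) * L) ≤ 2 := by
  refine div_le_of_le_mul₀ (by positivity) zero_le_two ?_
  have h2r : (2 : ℝ) ^ r ≤ 2 * 2 ^ (r - 1) := by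
    rw [← pow_succ']
    exact pow_le_pow_right₀ one_le_two (by omega)
  nlinarith

theorem stmt18_general {Z M : Type*} [MeasurableSpace Z] [MetricSpace M]
    {r : ℕ} {Λ : Type*} [Fintype Λ]
    (ν : Measure Z)
    (f : (Fin r → Bool) × Λ → Z → ℝ)
    (hf0 : ∀ θ z, 0 ≤ f θ z)
    (hfint : ∀ θ, ∫ z, f θ z ∂ν = 1)
    (ψ : (Fin r → Bool) × Λ → M) (T : Z → M)
    (s : ℝ) (hs : 0 < s) (α : ℝ) (hα0 : 0 ≤ α)
    (hα : ∀ θ θ' : (Fin r → Bool) × Λ,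
      (1 : ℝ) ≤ ∑ i : Fin r, (if θ.1 i = θ'.1 i then (0 : ℝ) else 1) →
      α * ∑ i : Fin r, (if θ.1 i = θ'.1 i then (0 : ℝ) else 1) ≤
        dist (ψ θ) (ψ θ') ^ s)
    (hTint : ∀ θ, Integrable (fun z => dist (T z) (ψ θ) ^ s * f θ z) ν) :
    α * (r / 2) *
      (⨅ i : Fin r, ∫ z,
        min ((1 / (2 ^ (r - 1) * (Fintype.card Λ : ℝ))) *
              ∑ θ ∈ Finset.univ.filter (fun θ : (Fin r → Bool) × Λ => θ.1 i = false),
                f θ z)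
            ((1 / (2 ^ (r - 1) * (Fintype.card Λ : ℝ))) *
              ∑ θ ∈ Finset.univ.filter (fun θ : (Fin r → Bool) × Λ => θ.1 i = true),
                f θ z) ∂ν) ≤
    ⨆ θ : (Fin r → Bool) × Λ,
      2 ^ s * ∫ z, dist (T z) (ψ θ) ^ s * f θ z ∂ν := by
  set c : ℝ := 1 / (2 ^ (r - 1) * (Fintype.card Λ : ℝ))
  set A : Fin r → ℝ := fun i => ∫ z, min (c * ∑ θ with θ.1 i = false, f θ z)
    (c * ∑ θ with θ.1 i = true, f θ z) ∂ν
  set R : (Fin r → Bool) × Λ → ℝ := fun θ => 2 ^ s * ∫ z, dist (T z) (ψ θ) ^ s * f θ z ∂ν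
  have hα' : ∀ θ θ' : (Fin r → Bool) × Λ, θ.1 ≠ θ'.1 →
      α * hammingDist θ.1 θ'.1 ≤ dist (ψ θ) (ψ θ') ^ s := fun θ θ' h => by
    have h1 : (1 : ℝ) ≤ hammingDist θ.1 θ'.1 := by exact_mod_cast hammingDist_pos.2 h
    rw [hammingDist_cast_eq_sum] at h1 ⊢
    exact hα θ θ' h1
  have hc : 0 ≤ c := by positivity
  have hcard : c * Fintype.card ((Fin r → Bool) × Λ) ≤ 2 := by
    simp only [c, Fintype.card_prod, Fintype.card_fun, Fintype.card_bool, Fintype.card_fin,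
      one_div_mul_eq_div]
    exact_mod_cast two_pow_mul_div_two_pow_pred_mul_le r (Nat.cast_nonneg (Fintype.card Λ))
  have hinf : (r : ℝ) * ⨅ i, A i ≤ ∑ i, A i := by
    simpa using card_nsmul_le_sum univ A _ fun i _ => ciInf_le (Set.finite_range A).bddBelow i
  have hsup : ∑ θ, R θ ≤ Fintype.card ((Fin r → Bool) × Λ) * ⨆ θ, R θ := by
    simpa using sum_le_card_nsmul univ R _ fun θ _ => le_ciSup (Set.finite_range R).bddAbove θ
  have hR : 0 ≤ ⨆ θ, R θ := Real.iSup_nonneg fun θ =>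
    mul_nonneg (by positivity) (integral_nonneg fun z => mul_nonneg (by positivity) (hf0 θ z))
  calc α * (r / 2) * ⨅ i, A i = α * (r * ⨅ i, A i) / 2 := by ring
    _ ≤ α * (∑ i, A i) / 2 := by gcongr
    _ ≤ c * (∑ θ, R θ) / 2 := by
        gcongr ?_ / 2
        exact mul_sum_integral_min_le_mul_sum_two_rpow_mul_integral Prod.fst ψ hs.le hα0 hα' ν f
          hf0 (fun θ => integrable_of_integral_eq_one (hfint θ)) T hTint hc
    _ ≤ c * (Fintype.card ((Fin r → Bool) × Λ) * ⨆ θ, R θ) / 2 := by gcongr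
    _ ≤ ⨆ θ, R θ := by nlinarith

/-- Le Cam–Assouad hybrid bound, Lemma AL, special case:
`Θ = {0,1}^r × Λ`, each `P_θ` has density `f θ` w.r.t. `ν`, `ψ : Θ → M` with
`(M,d)` a metric space. With `H` the Hamming distance on the first component,
`P̄_{a,i}` the uniform mixture over `{θ : γ_i(θ) = a}`, and `α` a per-comparison
bound satisfying `α · H(γ(θ), γ(θ')) ≤ d(ψθ, ψθ')^s` whenever `H ≥ 1`, every
estimator `T` satisfies
`max_θ 2^s E_θ d(T, ψθ)^s ≥ α (r/2) min_i ‖P̄_{0,i} ∧ P̄_{1,i}‖`. -/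
theorem stmt18 {Z M : Type*} [MeasurableSpace Z] [MetricSpace M]
    {r : ℕ} {Λ : Type*} [Fintype Λ] [Nonempty Λ]
    (ν : Measure Z)
    (f : (Fin r → Bool) × Λ → Z → ℝ)
    (hf0 : ∀ θ z, 0 ≤ f θ z)
    (hfmeas : ∀ θ, Measurable (f θ))
    (hfint : ∀ θ, ∫ z, f θ z ∂ν = 1)
    (ψ : (Fin r → Bool) × Λ → M) (T : Z → M)
    (s : ℝ) (hs : 0 < s) (α : ℝ) (hα0 : 0 ≤ α)
    (hα : ∀ θ θ' : (Fin r → Bool) × Λ,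
      (1 : ℝ) ≤ ∑ i : Fin r, (if θ.1 i = θ'.1 i then (0 : ℝ) else 1) →
      α * ∑ i : Fin r, (if θ.1 i = θ'.1 i then (0 : ℝ) else 1) ≤
        dist (ψ θ) (ψ θ') ^ s)
    (hTint : ∀ θ, Integrable (fun z => dist (T z) (ψ θ) ^ s * f θ z) ν) :
    α * (r / 2) *
      (⨅ i : Fin r, ∫ z,
        min ((1 / (2 ^ (r - 1) * (Fintype.card Λ : ℝ))) *
              ∑ θ ∈ Finset.univ.filter (fun θ : (Fin r → Bool) × Λ => θ.1 i = false),
                f θ z)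
            ((1 / (2 ^ (r - 1) * (Fintype.card Λ : ℝ))) *
              ∑ θ ∈ Finset.univ.filter (fun θ : (Fin r → Bool) × Λ => θ.1 i = true),
                f θ z) ∂ν) ≤
    ⨆ θ : (Fin r → Bool) × Λ,
      2 ^ s * ∫ z, dist (T z) (ψ θ) ^ s * f θ z ∂ν :=
  stmt18_general ν f hf0 hfint ψ T s hs α hα0 hα hTint
end
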